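/- arXiv:2103.08813 — 3 statements merged into one kernel-verified Lean document; each statement's English description precedes it below -/
import Mathlib

section
/- Let F : ℝⁿ → Set ℝⁿ model a control system and suppose every admissible trajectory r has cost vector J(r) ∈ ℝ². Define the Pareto front 𝓕 as the set of cost vectors z attained by admissible trajectories such that no admissible trajectory has cost vector w with w ≤ z and w ≠ z. Define Σ := { z* + Θ(μ)·μ : μ ∈ [0,1]², μ₁+μ₂=1 }, where z* is the utopian point and Θ(μ) = inf{τ ≥ 0 : some admissible trajectory has cost ≤ z* + τμ componentwise}. Then 𝓕 ⊆ Σ, i.e., every Pareto optimal cost vector equals z* + Θ(μ)·μ for some μ in the unit simplex. -/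
/-!
A Pareto point `z` lies above the utopian point `z*`, so `z - z*` is a nonnegative vector and
hence `τ • μ` with `τ` its coordinate sum and `μ` in the simplex. Then `τ` belongs to the set whose
infimum defines `Θ(μ)`, and no smaller level `t` does: an attainable `w ≤ z* + t • μ` would satisfy
`w ≤ z` and be strictly smaller than `z` in a coordinate where `μ` is positive, contradicting
Pareto minimality. Hence `Θ(μ) = τ` and `z = z* + Θ(μ) • μ`.
-/

theorem exists_mem_stdSimplex_eq_sum_smul {ι : Type*} [Fintype ι] [Nonempty ι] {d : ι → ℝ}
    (hd : 0 ≤ d) : ∃ μ ∈ stdSimplex ℝ ι, d = (∑ i, d i) • μ := by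
  classical
  rcases (Finset.sum_nonneg fun i _ => hd i).eq_or_lt with hsum | hsum
  · refine ⟨Pi.single (Classical.arbitrary ι) 1, single_mem_stdSimplex ℝ _, ?_⟩
    rw [← hsum, zero_smul]
    exact (Fintype.sum_eq_zero_iff_of_nonneg hd).1 hsum.symm
  · refine ⟨(∑ i, d i)⁻¹ • d, ⟨fun i => ?_, ?_⟩, ?_⟩
    · exact mul_nonneg (inv_nonneg.2 hsum.le) (hd i)
    · simp only [Pi.smul_apply, smul_eq_mul, ← Finset.mul_sum, inv_mul_cancel₀ hsum.ne']
    · rw [smul_smul, mul_inv_cancel₀ hsum.ne', one_smul]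

theorem sInf_levels_eq_of_minimal {ι : Type*} {S : Set (ι → ℝ)} {z a μ : ι → ℝ} {τ : ℝ}
    (hz : Minimal (· ∈ S) z) (hτ : 0 ≤ τ) (hμ : 0 ≤ μ) (hμ₀ : μ ≠ 0) (hza : z = a + τ • μ) :
    sInf {t : ℝ | 0 ≤ t ∧ ∃ w ∈ S, w ≤ a + t • μ} = τ := by
  have hτ_mem : τ ∈ {t : ℝ | 0 ≤ t ∧ ∃ w ∈ S, w ≤ a + t • μ} := ⟨hτ, z, hz.prop, hza.le⟩
  refine le_antisymm (csInf_le ⟨0, fun t ht => ht.1⟩ hτ_mem) (le_csInf ⟨τ, hτ_mem⟩ ?_)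
  rintro t ⟨-, w, hwS, hwt⟩
  by_contra! htτ
  obtain ⟨j, hj⟩ : ∃ j, μ j ≠ 0 := Function.ne_iff.1 hμ₀
  have hwz : w ≤ z := fun i => by
    have := hwt i
    simp only [hza, Pi.add_apply, Pi.smul_apply, smul_eq_mul] at this ⊢
    nlinarith [mul_le_mul_of_nonneg_right htτ.le (hμ i)]
  have hwj := hwt j
  rw [hz.eq_of_le hwS hwz, hza] at hwj
  simp only [Pi.add_apply, Pi.smul_apply, smul_eq_mul, add_le_add_iff_left] at hwj
  exact htτ.not_ge (le_of_mul_le_mul_right hwj ((hμ j).lt_of_ne' hj))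

theorem pareto_front_subset_sigma_general (S : Set (Fin 2 → ℝ))
    (hbdd : ∀ i : Fin 2, BddBelow ((fun w => w i) '' S))
    (zstar : Fin 2 → ℝ)
    (hz : ∀ i : Fin 2, zstar i = sInf ((fun w => w i) '' S)) :
    {z | z ∈ S ∧ ¬ ∃ w ∈ S, w ≤ z ∧ w ≠ z} ⊆
      {z | ∃ μ : Fin 2 → ℝ, (∀ i, 0 ≤ μ i ∧ μ i ≤ 1) ∧ μ 0 + μ 1 = 1 ∧
        z = zstar +
          (sInf {τ : ℝ | 0 ≤ τ ∧ ∃ w ∈ S, w ≤ zstar + τ • μ}) • μ} := by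
  rintro z ⟨hzS, hpar⟩
  have hmin : Minimal (· ∈ S) z :=
    ⟨hzS, fun w hwS hwz => by_contra fun hzw => hpar ⟨w, hwS, hwz, fun h => hzw (h ▸ le_rfl)⟩⟩
  have hge : zstar ≤ z := fun i => hz i ▸ csInf_le (hbdd i) ⟨z, hzS, rfl⟩
  obtain ⟨μ, hμ, hd⟩ := exists_mem_stdSimplex_eq_sum_smul (sub_nonneg.2 hge)
  have hzμ : z = zstar + (∑ i, (z - zstar) i) • μ := by rw [← hd, add_sub_cancel]
  have hμ₀ : μ ≠ 0 := fun h => by simpa [h] using hμ.2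
  refine ⟨μ, fun i => mem_Icc_of_mem_stdSimplex hμ i, by simpa [Fin.sum_univ_two] using hμ.2, ?_⟩
  rw [sInf_levels_eq_of_minimal hmin (Finset.sum_nonneg fun i _ => sub_nonneg.2 (hge i)) hμ.1
    hμ₀ hzμ]
  exact hzμ

/-- The Pareto front `𝓕` of a set `S` of attainable cost vectors is contained
in the manifold `Σ = {z* + Θ(μ)·μ : μ in the unit simplex}`. -/
theorem pareto_front_subset_sigma (S : Set (Fin 2 → ℝ)) (hS : S.Nonempty)
    (hbdd : ∀ i : Fin 2, BddBelow ((fun w => w i) '' S))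
    (zstar : Fin 2 → ℝ)
    (hz : ∀ i : Fin 2, zstar i = sInf ((fun w => w i) '' S)) :
    {z | z ∈ S ∧ ¬ ∃ w ∈ S, w ≤ z ∧ w ≠ z} ⊆
      {z | ∃ μ : Fin 2 → ℝ, (∀ i, 0 ≤ μ i ∧ μ i ≤ 1) ∧ μ 0 + μ 1 = 1 ∧
        z = zstar +
          (sInf {τ : ℝ | 0 ≤ τ ∧ ∃ w ∈ S, w ≤ zstar + τ • μ}) • μ} :=
  pareto_front_subset_sigma_general S hbdd zstar hz
end

section
/- Let S ⊆ ℝ² be a set of attainable cost vectors, z* its componentwise infimum (assumed finite), and μ ∈ [0,1]² a simplex vector with μ₁ + μ₂ = 1. If z ∈ 𝓕 (the Pareto front) can be written z = z* + τμ with τ ≥ 0, and τ > Θ(μ) := inf{τ' ≥ 0 : ∃ w ∈ S, w ≤ z* + τ'μ} where the infimum is attained, then z is dominated by ẑ := z* + Θ(μ)μ, contradicting Pareto optimality; hence τ = Θ(μ). -/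
open Set

/-- If a Pareto optimal point `z = z* + τμ` had `τ > Θ(μ)` it would be
dominated by `ẑ = z* + Θ(μ)μ`; hence `τ = Θ(μ)` (Lemma 1 of the paper). -/
theorem pareto_point_parameter_eq_theta (S : Set (Fin 2 → ℝ)) (hS : S.Nonempty)
    (hbdd : ∀ i : Fin 2, BddBelow ((fun w => w i) '' S))
    (zstar : Fin 2 → ℝ)
    (hz : ∀ i : Fin 2, zstar i = sInf ((fun w => w i) '' S))
    (μ : Fin 2 → ℝ) (hμ : ∀ i, 0 ≤ μ i ∧ μ i ≤ 1) (hμsum : μ 0 + μ 1 = 1)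
    (hμpos : ∃ i, 0 < μ i)
    (Θ : ℝ) (hΘ : Θ = sInf {τ : ℝ | 0 ≤ τ ∧ ∃ w ∈ S, w ≤ zstar + τ • μ})
    (hΘatt : ∃ w ∈ S, w ≤ zstar + Θ • μ)
    (z : Fin 2 → ℝ) (hzS : z ∈ S)
    (hpareto : ¬ ∃ w ∈ S, w ≤ z ∧ w ≠ z)
    (τ : ℝ) (hτ : 0 ≤ τ) (hrep : z = zstar + τ • μ) :
    τ = Θ := by

  push_neg at hpareto
  obtain ⟨w, hwS, hwle⟩ := hΘatt
  have hΘleτ : Θ ≤ τ := by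
    rw [hΘ]
    apply csInf_le
    · exact ⟨0, fun x hx => hx.1⟩
    · exact ⟨hτ, z, hzS, le_of_eq hrep⟩
  have hwz : w ≤ z := by
    refine hwle.trans ?_
    intro i
    have := (hμ i).1
    simp only [hrep, Pi.add_apply, Pi.smul_apply, smul_eq_mul]
    nlinarith
  have hweq : w = z := hpareto w hwS hwz
  obtain ⟨i, hi⟩ := hμpos
  have h1 : z i ≤ zstar i + Θ * μ i := hweq ▸ hwle i
  have h2 : z i = zstar i + τ * μ i := by simp [hrep]
  have hτleΘ : τ ≤ Θ := by nlinarith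
  linarith
end

section
/- Closed-form Hamiltonian: for all q ∈ ℝ⁷, t_f ≥ 0, m > 0, v_ex > 0, T_max ≥ 0, and C ∈ ℝ, the quantity −t_f · min over (α, δ, T) ∈ [−π,π]×[−π/2,π/2]×[0,T_max] of ( (T/m)(q₃ cos α + sin α (q₄ sin δ + q₅ cos δ)) − q₆ T / v_ex ) − t_f · C equals t_f · max( q₆ T_max / v_ex + (T_max/m)·√(q₃²+q₄²+q₅²), 0 ) − t_f · C. -/
open Real

/-- Point on the unit circle is reached by some angle in `[-π, π]`. -/
lemma exists_angle_circle (a b : ℝ) (h : a^2 + b^2 = 1) :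
    ∃ α ∈ Set.Icc (-π) π, Real.cos α = a ∧ Real.sin α = b := by
  have ha1 : -1 ≤ a := by nlinarith [sq_nonneg b]
  have ha2 : a ≤ 1 := by nlinarith [sq_nonneg b]
  rcases le_or_gt 0 b with hb | hb
  · refine ⟨Real.arccos a, ⟨by linarith [Real.arccos_nonneg a, Real.pi_pos],
      Real.arccos_le_pi a⟩, Real.cos_arccos ha1 ha2, ?_⟩
    rw [Real.sin_arccos]
    have : 1 - a^2 = b^2 := by linarith
    rw [this, Real.sqrt_sq hb]
  · refine ⟨-Real.arccos a, ⟨by linarith [Real.arccos_le_pi a],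
      by linarith [Real.arccos_nonneg a, Real.pi_pos]⟩, ?_, ?_⟩
    · rw [Real.cos_neg, Real.cos_arccos ha1 ha2]
    · rw [Real.sin_neg, Real.sin_arccos]
      have : 1 - a^2 = b^2 := by linarith
      rw [this, Real.sqrt_sq_eq_abs, abs_of_neg hb, neg_neg]

/-- There is a `δ ∈ [-π/2, π/2]` maximizing `(q4 sin δ + q5 cos δ)²`. -/
lemma exists_delta (q4 q5 : ℝ) :
    ∃ δ ∈ Set.Icc (-(π/2)) (π/2),
      (q4 * Real.sin δ + q5 * Real.cos δ)^2 = q4^2 + q5^2 := by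
  set r := Real.sqrt (q4^2 + q5^2) with hr
  have hr0 : 0 ≤ r := Real.sqrt_nonneg _
  have hr2 : r^2 = q4^2 + q5^2 := Real.sq_sqrt (by positivity)
  by_cases hrz : r = 0
  · have h4 : q4 = 0 := by nlinarith [sq_nonneg q4, sq_nonneg q5]
    have h5 : q5 = 0 := by nlinarith [sq_nonneg q4, sq_nonneg q5]
    exact ⟨0, ⟨by linarith [Real.pi_pos], by linarith [Real.pi_pos]⟩,
      by simp [h4, h5]⟩
  · have hrpos : 0 < r := lt_of_le_of_ne hr0 (Ne.symm hrz)
    rcases le_or_gt 0 q5 with hq5 | hq5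
    · have hb1 : -1 ≤ q4 / r := by
        rw [le_div_iff₀ hrpos]; nlinarith
      have hb2 : q4 / r ≤ 1 := by
        rw [div_le_one hrpos]; nlinarith
      refine ⟨Real.arcsin (q4 / r), Real.arcsin_mem_Icc _, ?_⟩
      rw [Real.sin_arcsin hb1 hb2, Real.cos_arcsin]
      have h1 : 1 - (q4 / r)^2 = (q5 / r)^2 := by
        field_simp; nlinarith
      rw [h1, Real.sqrt_sq (by positivity)]
      have he : q4 * (q4 / r) + q5 * (q5 / r) = r := by
        field_simp; nlinarith
      rw [he]; nlinarith
    · have hb1 : -1 ≤ -q4 / r := by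
        rw [le_div_iff₀ hrpos]; nlinarith
      have hb2 : -q4 / r ≤ 1 := by
        rw [div_le_one hrpos]; nlinarith
      refine ⟨Real.arcsin (-q4 / r), Real.arcsin_mem_Icc _, ?_⟩
      rw [Real.sin_arcsin hb1 hb2, Real.cos_arcsin]
      have h1 : 1 - (-q4 / r)^2 = (-q5 / r)^2 := by
        field_simp; nlinarith
      rw [h1, Real.sqrt_sq (div_nonneg (by linarith) hr0)]
      have he : q4 * (-q4 / r) + q5 * (-q5 / r) = -r := by
        field_simp; nlinarith
      rw [he]; nlinarith

/-- There is an `α ∈ [-π, π]` achieving `a cos α + b sin α = -√(a²+b²)`. -/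
lemma exists_alpha (a b : ℝ) :
    ∃ α ∈ Set.Icc (-π) π,
      a * Real.cos α + b * Real.sin α = -Real.sqrt (a^2 + b^2) := by
  set r := Real.sqrt (a^2 + b^2) with hr
  have hr0 : 0 ≤ r := Real.sqrt_nonneg _
  have hr2 : r^2 = a^2 + b^2 := Real.sq_sqrt (by positivity)
  by_cases hrz : r = 0
  · have h4 : a = 0 := by nlinarith [sq_nonneg a, sq_nonneg b]
    have h5 : b = 0 := by nlinarith [sq_nonneg a, sq_nonneg b]
    exact ⟨0, ⟨by linarith [Real.pi_pos], by linarith [Real.pi_pos]⟩,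
      by simp [h4, h5, hrz]⟩
  · have hrpos : 0 < r := lt_of_le_of_ne hr0 (Ne.symm hrz)
    have hcirc : (-a / r)^2 + (-b / r)^2 = 1 := by
      field_simp; nlinarith
    obtain ⟨α, hα, hcos, hsin⟩ := exists_angle_circle _ _ hcirc
    refine ⟨α, hα, ?_⟩
    rw [hcos, hsin]
    field_simp
    nlinarith

/-- Closed-form Hamiltonian (Section IV.A): the controlled part of the
Hamiltonian, minimized over thrust angles and magnitude, admits the analytic
expression `t_f · max(q₆ T_max/v_ex + (T_max/m)√(q₃²+q₄²+q₅²), 0) − t_f C`. -/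
theorem closed_form_hamiltonian (q3 q4 q5 q6 : ℝ) (tf m vex Tmax C : ℝ)
    (htf : 0 ≤ tf) (hm : 0 < m) (hvex : 0 < vex) (hTmax : 0 ≤ Tmax) :
    -tf * sInf {v : ℝ | ∃ α ∈ Set.Icc (-π) π, ∃ δ ∈ Set.Icc (-(π/2)) (π/2),
        ∃ T ∈ Set.Icc (0:ℝ) Tmax,
        v = (T / m) * (q3 * Real.cos α
              + Real.sin α * (q4 * Real.sin δ + q5 * Real.cos δ))
            - q6 * T / vex}
      - tf * C
    = tf * max (q6 * Tmax / vex
        + (Tmax / m) * Real.sqrt (q3^2 + q4^2 + q5^2)) 0 - tf * C := by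
  set N := Real.sqrt (q3^2 + q4^2 + q5^2) with hN
  set M := q6 * Tmax / vex + (Tmax / m) * N with hM
  set S := {v : ℝ | ∃ α ∈ Set.Icc (-π) π, ∃ δ ∈ Set.Icc (-(π/2)) (π/2),
        ∃ T ∈ Set.Icc (0:ℝ) Tmax,
        v = (T / m) * (q3 * Real.cos α
              + Real.sin α * (q4 * Real.sin δ + q5 * Real.cos δ))
            - q6 * T / vex} with hS
  have hN0 : 0 ≤ N := Real.sqrt_nonneg _
  have hN2 : N^2 = q3^2 + q4^2 + q5^2 := Real.sq_sqrt (by positivity)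
  -- 0 ∈ S
  have hmem0 : (0:ℝ) ∈ S := by
    refine ⟨0, ⟨by linarith [Real.pi_pos], by linarith [Real.pi_pos]⟩,
      0, ⟨by linarith [Real.pi_pos], by linarith [Real.pi_pos]⟩,
      0, ⟨le_refl 0, hTmax⟩, by ring⟩
  -- -M ∈ S
  have hmemM : -M ∈ S := by
    obtain ⟨δ, hδ, hu⟩ := exists_delta q4 q5
    set u := q4 * Real.sin δ + q5 * Real.cos δ with hudef
    obtain ⟨α, hα, hval⟩ := exists_alpha q3 u
    refine ⟨α, hα, δ, hδ, Tmax, ⟨hTmax, le_refl _⟩, ?_⟩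
    have h1 : Real.sqrt (q3^2 + u^2) = N := by
      rw [hN, hu]; ring_nf
    have h2 : q3 * Real.cos α + Real.sin α * u = -N := by
      rw [← h1, ← hval]; ring
    rw [h2, hM]; field_simp; ring
  -- lower bound
  have hbdd : ∀ v ∈ S, -(max M 0) ≤ v := by
    rintro v ⟨α, hα, δ, hδ, T, hT, rfl⟩
    set u := q4 * Real.sin δ + q5 * Real.cos δ with hudef
    set E := q3 * Real.cos α + Real.sin α * u with hEdef
    have hu2 : u^2 ≤ q4^2 + q5^2 := by
      rw [hudef]
      nlinarith [sq_nonneg (q4 * Real.cos δ - q5 * Real.sin δ),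
        Real.sin_sq_add_cos_sq δ, sq_nonneg q4, sq_nonneg q5]
    have hE2 : E^2 ≤ q3^2 + u^2 := by
      rw [hEdef]
      nlinarith [sq_nonneg (q3 * Real.sin α - Real.cos α * u),
        Real.sin_sq_add_cos_sq α, sq_nonneg q3, sq_nonneg u]
    have hE : -N ≤ E := by nlinarith [sq_nonneg (E + N)]
    have hTE : T * (-N) ≤ T * E := mul_le_mul_of_nonneg_left hE hT.1
    rcases le_or_gt (N / m + q6 / vex) 0 with hk | hk
    · have hmax : max M 0 = 0 := max_eq_right (by
        have : M = Tmax * (N / m + q6 / vex) := by rw [hM]; ring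
        rw [this]
        exact mul_nonpos_of_nonneg_of_nonpos hTmax hk)
      rw [hmax, neg_zero]
      have h1 : 0 ≤ T * (-N/m - q6/vex) := by
        apply mul_nonneg hT.1
        have : -N/m - q6/vex = -(N/m + q6/vex) := by ring
        rw [this]; linarith
      have h2 : T * (-N) / m ≤ T * E / m := by
        apply div_le_div_of_nonneg_right hTE hm.le
      calc (0:ℝ) ≤ T * (-N/m - q6/vex) := h1
        _ = T * (-N) / m - q6 * T / vex := by field_simp
        _ ≤ T * E / m - q6 * T / vex := by linarith
        _ = T / m * E - q6 * T / vex := by ring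
    · have hmax : M ≤ max M 0 := le_max_left _ _
      have hMeq : M = Tmax * (N / m + q6 / vex) := by rw [hM]; ring
      have h1 : T * (N / m + q6 / vex) ≤ Tmax * (N / m + q6 / vex) :=
        mul_le_mul_of_nonneg_right hT.2 (le_of_lt hk)
      have h2 : T * (-N) / m ≤ T * E / m := by
        apply div_le_div_of_nonneg_right hTE hm.le
      have h3 : -M ≤ -(T * (N / m + q6 / vex)) := by
        rw [hMeq]; linarith
      calc -(max M 0) ≤ -M := by linarith
        _ ≤ -(T * (N / m + q6 / vex)) := h3
        _ = T * (-N) / m - q6 * T / vex := by field_simp; ring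
        _ ≤ T * E / m - q6 * T / vex := by linarith
        _ = T / m * E - q6 * T / vex := by ring
  have hbddBelow : BddBelow S := ⟨-(max M 0), fun v hv => hbdd v hv⟩
  have key : sInf S = -(max M 0) := by
    apply le_antisymm
    · rcases max_cases M 0 with ⟨h1, _⟩ | ⟨h1, _⟩
      · rw [h1]; exact csInf_le hbddBelow hmemM
      · rw [h1, neg_zero]; exact csInf_le hbddBelow hmem0
    · exact le_csInf ⟨0, hmem0⟩ (fun v hv => hbdd v hv)
  rw [key]; ring
end
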